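/- arXiv:math/0605438 — 2 statements merged into one kernel-verified Lean document; each statement's English description precedes it below -/
import Mathlib

section
/- Let (𝓔ₙ⁰)_{n∈ℕ} be a sequence of collections of rectangles for a homeomorphism R of a compact manifold M, satisfying hypotheses A₁, A₂, A₃, and set K = ⋂ₙ Eₙ⁰. Fix n ≥ 0 and let X → ⋯ → X' = R^p(X) be a path in the graph 𝓖(𝓔ₙⁿ) with X, X' ∈ 𝓔ₙ⁰. Then R^p(K ∩ X) = K ∩ X'. -/
open Set Function MeasureTheory Topology Filter

noncomputable section

variable {M : Type*}

section Defs
variable [TopologicalSpace M]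

/-- A rectangle of `M`: a subset homeomorphic to the closed unit ball of `ℝ^d`. -/
def IsRectangle (d : ℕ) (X : Set M) : Prop :=
  Nonempty (X ≃ₜ (Metric.closedBall (0 : EuclideanSpace ℝ (Fin d)) 1 :
    Set (EuclideanSpace ℝ (Fin d))))

/-- A collection of rectangles: a finite family of pairwise disjoint rectangles. -/
def IsRectCollection (d : ℕ) (𝓔 : Set (Set M)) : Prop :=
  𝓔.Finite ∧ (∀ X ∈ 𝓔, IsRectangle d X) ∧ 𝓔.Pairwise Disjoint

/-- The union `E` of the rectangles of a collection `𝓔`. -/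
def collUnion (𝓔 : Set (Set M)) : Set M := ⋃₀ 𝓔

/-- The collection `𝓔ⁿ = ⋃_{|k| ≤ n} R^k(𝓔)`. -/
def iterColl (R : M ≃ₜ M) (𝓔 : Set (Set M)) (n : ℕ) : Set (Set M) :=
  {Y | ∃ k : ℤ, |k| ≤ (n : ℤ) ∧ ∃ X ∈ 𝓔, Y = (R.toEquiv ^ k) '' X}

/-- `𝓔` is `p` times iterable. -/
def IterableColl (R : M ≃ₜ M) (𝓔 : Set (Set M)) (p : ℕ) : Prop :=
  ∀ X ∈ 𝓔, ∀ X' ∈ 𝓔, ∀ k l : ℤ, |k| ≤ (p : ℤ) → |l| ≤ (p : ℤ) →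
    Disjoint ((R.toEquiv ^ k) '' X) ((R.toEquiv ^ l) '' X') ∨
      (R.toEquiv ^ k) '' X = (R.toEquiv ^ l) '' X'

/-- The oriented graph `𝓖(𝓔)` (vertices the elements of `𝓔`, an edge from `X` to `R(X)`)
has no cycle. -/
def HasNoCycle (R : M ≃ₜ M) (𝓔 : Set (Set M)) : Prop :=
  ¬ ∃ (X : Set M) (p : ℕ), X ∈ 𝓔 ∧ 1 ≤ p ∧
      (∀ i : ℕ, i ≤ p → (R.toEquiv ^ (i : ℤ)) '' X ∈ 𝓔) ∧ (R.toEquiv ^ (p : ℤ)) '' X = X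

/-- The oriented graph `𝓖(𝓔)` has no edge. -/
def EdgelessGraph (R : M ≃ₜ M) (𝓔 : Set (Set M)) : Prop :=
  ∀ X ∈ 𝓔, (R : M → M) '' X ∉ 𝓔

/-- `𝓕` refines `𝓔`. -/
def Refines (𝓕 𝓔 : Set (Set M)) : Prop :=
  (∀ X ∈ 𝓔, ∃ Y ∈ 𝓕, Y ⊆ X) ∧
    ∀ X ∈ 𝓔, ∀ Y ∈ 𝓕, Disjoint X Y ∨ Y ⊆ interior X

/-- `𝓕` is compatible with `𝓔` for `p` iterates. -/
def CompatibleFor (R : M ≃ₜ M) (𝓕 𝓔 : Set (Set M)) (p : ℕ) : Prop :=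
  collUnion 𝓕 ⊆ collUnion 𝓔 ∧
    ∀ k : ℤ, |k| ≤ 2 * (p : ℤ) + 1 →
      (R.toEquiv ^ k) '' collUnion 𝓕 ∩ collUnion 𝓔 ⊆ collUnion 𝓕

/-- Hypothesis A₁. -/
def HypA1 (R : M ≃ₜ M) (𝓔 : ℕ → Set (Set M)) : Prop :=
  (∀ n, IterableColl R (𝓔 n) (n + 1) ∧ HasNoCycle R (iterColl R (𝓔 n) n)) ∧
  (∀ m n, m < n → Refines (iterColl R (𝓔 n) (n + 1)) (iterColl R (𝓔 m) (m + 1))) ∧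
  (∀ n, CompatibleFor R (𝓔 (n + 1)) (𝓔 n) (n + 1))

/-- Hypothesis A₂ (no isolated point). -/
def HypA2 (𝓔 : ℕ → Set (Set M)) : Prop :=
  ∀ n, ∀ X ∈ 𝓔 n, ∃ Y ∈ 𝓔 (n + 1), ∃ Z ∈ 𝓔 (n + 1), Y ≠ Z ∧ Y ⊆ X ∧ Z ⊆ X

/-- The set `K = ⋂ₙ Eₙ⁰`. -/
def limitK (𝓔 : ℕ → Set (Set M)) : Set M := ⋂ n, collUnion (𝓔 n)

/-- `Ψₙ = Mₙ ∘ ⋯ ∘ M₁`, `Ψ₀ = id`. -/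
def Psi (Mseq : ℕ → M ≃ₜ M) : ℕ → M ≃ₜ M
  | 0 => Homeomorph.refl M
  | n + 1 => (Psi Mseq n).trans (Mseq (n + 1))

/-- `gₙ = Ψₙ⁻¹ ∘ R ∘ Ψₙ`. -/
def gSeq (R : M ≃ₜ M) (Mseq : ℕ → M ≃ₜ M) (n : ℕ) : M ≃ₜ M :=
  ((Psi Mseq n).trans R).trans (Psi Mseq n).symm

/-- The support of a homeomorphism. -/
def homeoSupport (f : M ≃ₜ M) : Set M := closure {x | f x ≠ x}

/-- Hypothesis B₁ (support). -/
def HypB1 (R : M ≃ₜ M) (𝓔 : ℕ → Set (Set M)) (Mseq : ℕ → M ≃ₜ M) : Prop :=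
  ∀ n : ℕ, homeoSupport (Mseq (n + 1)) ⊆ collUnion (iterColl R (𝓔 n) n)

/-- Hypothesis B₂ (commutation). -/
def HypB2 (R : M ≃ₜ M) (𝓔 : ℕ → Set (Set M)) (Mseq : ℕ → M ≃ₜ M) : Prop :=
  ∀ n : ℕ, ∀ X ∈ iterColl R (𝓔 n) n, (R : M → M) '' X ∈ iterColl R (𝓔 n) n →
    ∀ x ∈ X, Mseq (n + 1) (R x) = R (Mseq (n + 1) x)

end Defs

section MetricDefs
variable [MetricSpace M]

/-- Hypothesis A₃ (decay of the collections of rectangles). -/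
def HypA3 (R : M ≃ₜ M) (𝓔 : ℕ → Set (Set M)) : Prop :=
  ∀ ε : ℝ, 0 < ε → ∃ N : ℕ, ∀ n ≥ N, ∀ X ∈ iterColl R (𝓔 n) n, Metric.diam X ≤ ε

/-- Hypothesis B₃ (convergence). -/
def HypB3 (R : M ≃ₜ M) (𝓔 : ℕ → Set (Set M)) (Mseq : ℕ → M ≃ₜ M) : Prop :=
  ∀ ε : ℝ, 0 < ε → ∃ N : ℕ, ∀ n ≥ N,
    ∀ X ∈ iterColl R (𝓔 (n + 1)) (n + 2) \ iterColl R (𝓔 (n + 1)) n,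
      Metric.diam ((Psi Mseq n) ⁻¹' X) ≤ ε

/-- Hypothesis B₄ (fibres are thin): the internal radius of `Ψₙ⁻¹(Eₙ⁰)` tends to `0`. -/
def HypB4 (𝓔 : ℕ → Set (Set M)) (Mseq : ℕ → M ≃ₜ M) : Prop :=
  ∀ ε : ℝ, 0 < ε → ∃ N : ℕ, ∀ n ≥ N, ∀ (x : M) (r : ℝ),
    Metric.ball x r ⊆ (Psi Mseq n) ⁻¹' collUnion (𝓔 n) → r ≤ ε

end MetricDefs

section TopDefs
variable [TopologicalSpace M]

/-- A Cantor set in `M`. -/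
def IsCantorSet (K : Set M) : Prop :=
  K.Nonempty ∧ IsCompact K ∧ Perfect K ∧ IsTotallyDisconnected K

/-- A totally disconnected compact set is tamely embedded if it admits arbitrarily small
neighbourhoods that are finite unions of pairwise disjoint rectangles. -/
def TamelyEmbedded (d : ℕ) (Q : Set M) : Prop :=
  ∀ U : Set M, IsOpen U → Q ⊆ U →
    ∃ 𝓑 : Set (Set M), IsRectCollection d 𝓑 ∧ Q ⊆ interior (collUnion 𝓑) ∧ collUnion 𝓑 ⊆ U

/-- A Cantor set is dynamically coherent for `R`. -/
def DynamicallyCoherent (R : M ≃ₜ M) (K : Set M) : Prop :=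
  (∀ k : ℤ, ∃ U : Set M, IsOpen U ∧ (R.toEquiv ^ k) '' K ∩ K = U ∩ K) ∧
  ∀ p : ℕ, ∀ x ∈ K,
    (∃ k : ℕ, 1 ≤ k ∧ ∀ i : ℕ, k ≤ i → i ≤ k + p → (R.toEquiv ^ (i : ℤ)) x ∉ K) ∧
    (∃ l : ℕ, 1 ≤ l ∧ ∀ i : ℕ, l ≤ i → i ≤ l + p → (R.toEquiv ^ (-(i : ℤ))) x ∉ K)

/-- A Cantor set is dynamically meagre for `R`: it has empty interior in
`Λ = Cl(⋃ᵢ Rⁱ(K))`. -/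
def DynamicallyMeagre (R : M ≃ₜ M) (K : Set M) : Prop :=
  ∀ U : Set M, IsOpen U → U ∩ closure (⋃ i : ℤ, (R.toEquiv ^ i) '' K) ⊆ K →
    U ∩ closure (⋃ i : ℤ, (R.toEquiv ^ i) '' K) = ∅

/-- `R` is minimal on the invariant set `Λ` (every orbit of a point of `Λ` is dense in `Λ`). -/
def MinimalOnSet (R : M ≃ₜ M) (Λ : Set M) : Prop :=
  ∀ x ∈ Λ, Λ ⊆ closure (Set.range fun n : ℤ => (R.toEquiv ^ n) x)

/-- `R` is transitive on the invariant set `Λ` (some orbit is dense in `Λ`). -/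
def TransitiveOnSet (R : M ≃ₜ M) (Λ : Set M) : Prop :=
  ∃ x ∈ Λ, Λ ⊆ closure (Set.range fun n : ℤ => (R.toEquiv ^ n) x)

end TopDefs

/-- The support of a measure. -/
def measSupport {M : Type*} [TopologicalSpace M] [MeasurableSpace M] (μ : Measure M) : Set M :=
  {x | ∀ U : Set M, IsOpen U → x ∈ U → 0 < μ U}

/-- The measurable dynamical system `S` restricted to the `S`-invariant set `A` is isomorphic
to the system `T` restricted to the `T`-invariant set `B`, in the sense of Béguin–Crovisier–Le
Roux: there are full invariant subsets `X₀ ⊆ A`, `Y₀ ⊆ B` and a bijective bimeasurable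
conjugacy between them. -/
def MeasIsoOn {X Y : Type*} [MeasurableSpace X] [MeasurableSpace Y]
    (S : X → X) (A : Set X) (T : Y → Y) (B : Set Y) : Prop :=
  ∃ (X₀ : Set X) (Y₀ : Set Y) (Θ : X → Y),
    X₀ ⊆ A ∧ Y₀ ⊆ B ∧ MeasurableSet X₀ ∧ MeasurableSet Y₀ ∧
    S '' X₀ = X₀ ∧ T '' Y₀ = Y₀ ∧
    (∀ μ : Measure X, IsProbabilityMeasure μ → Measure.map S μ = μ → μ A = 1 → μ X₀ = 1) ∧
    (∀ ν : Measure Y, IsProbabilityMeasure ν → Measure.map T ν = ν → ν B = 1 → ν Y₀ = 1) ∧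
    Set.BijOn Θ X₀ Y₀ ∧
    (∀ V : Set Y, MeasurableSet V → MeasurableSet (X₀ ∩ Θ ⁻¹' V)) ∧
    (∀ U : Set X, MeasurableSet U → MeasurableSet (Θ '' (X₀ ∩ U))) ∧
    (∀ x ∈ X₀, Θ (S x) = T (Θ x))


section Aux
variable {N : Type*} [TopologicalSpace N]

lemma aux_zpow_apply (R : N ≃ₜ N) (a b : ℤ) (x : N) :
    (R.toEquiv ^ (a + b)) x = (R.toEquiv ^ a) ((R.toEquiv ^ b) x) := by
  rw [zpow_add]; rfl

lemma aux_zpow_image (R : N ≃ₜ N) (a b : ℤ) (S : Set N) :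
    (R.toEquiv ^ (a + b)) '' S = (R.toEquiv ^ a) '' ((R.toEquiv ^ b) '' S) := by
  rw [zpow_add, Equiv.Perm.coe_mul, Set.image_comp]

lemma aux_collUnion_anti (R : N ≃ₜ N) (𝓔 : ℕ → Set (Set N))
    (hcompat : ∀ n, CompatibleFor R (𝓔 (n + 1)) (𝓔 n) (n + 1)) {m n : ℕ} (h : m ≤ n) :
    collUnion (𝓔 n) ⊆ collUnion (𝓔 m) := by
  induction n, h using Nat.le_induction with
  | base => exact subset_rfl
  | succ n hn ih => exact Set.Subset.trans (hcompat n).1 ih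

/-- Key propagation lemma: if the points `R^{j i} x` all lie in `Eₙ⁰` and `x ∈ K`,
with consecutive exponent jumps bounded by `2n+1`, then `R^{j p} x ∈ K`. -/
lemma aux_key (R : N ≃ₜ N) (𝓔 : ℕ → Set (Set N))
    (hcompat : ∀ n, CompatibleFor R (𝓔 (n + 1)) (𝓔 n) (n + 1))
    (n p : ℕ) (j : ℕ → ℤ) (hj0 : j 0 = 0)
    (hstep : ∀ i < p, |j (i + 1) - j i| ≤ 2 * (n : ℤ) + 1)
    (x : N) (hbase : ∀ i ≤ p, (R.toEquiv ^ (j i)) x ∈ collUnion (𝓔 n))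
    (hx : x ∈ limitK 𝓔) : (R.toEquiv ^ (j p)) x ∈ limitK 𝓔 := by
  simp only [limitK, mem_iInter] at hx
  have hC : ∀ m, n ≤ m → ∀ i ≤ p, (R.toEquiv ^ (j i)) x ∈ collUnion (𝓔 m) := by
    intro m hm
    induction m, hm using Nat.le_induction with
    | base => exact hbase
    | succ m hm ih =>
      intro i hip
      induction i with
      | zero =>
        rw [hj0]
        simpa using hx (m + 1)
      | succ i ihi =>
        have h1 : (R.toEquiv ^ (j i)) x ∈ collUnion (𝓔 (m + 1)) := ihi (by omega)
        have h2 : (R.toEquiv ^ (j (i + 1))) x ∈ collUnion (𝓔 m) := ih (i + 1) hip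
        have hnm : (n : ℤ) ≤ (m : ℤ) := by exact_mod_cast hm
        have hk : |j (i + 1) - j i| ≤ 2 * (((m + 1 : ℕ)) : ℤ) + 1 := by
          have := hstep i (by omega)
          push_cast
          omega
        have hsub := (hcompat m).2 (j (i + 1) - j i) hk
        apply hsub
        refine ⟨⟨(R.toEquiv ^ (j i)) x, h1, ?_⟩, h2⟩
        have he : j (i + 1) - j i + j i = j (i + 1) := by ring
        rw [← aux_zpow_apply, he]
  simp only [limitK, mem_iInter]
  intro m
  rcases le_or_gt n m with h | h
  · exact hC m h p le_rfl
  · exact aux_collUnion_anti R 𝓔 hcompat h.le (hC n le_rfl p le_rfl)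

end Aux

/-- Lemma on coherence of `K` along paths. If `X → ⋯ → X' = R^p(X)` is a
path in the graph `𝓖(𝓔ₙⁿ)` with `X, X' ∈ 𝓔ₙ⁰`, then `R^p(K ∩ X) = K ∩ X'`. -/
theorem limitK_image_path (d : ℕ) (M : Type*) [MetricSpace M] [CompactSpace M]
    [ChartedSpace (EuclideanSpace ℝ (Fin d)) M]
    (R : M ≃ₜ M) (𝓔 : ℕ → Set (Set M)) (hrect : ∀ n, IsRectCollection d (𝓔 n))
    (hA1 : HypA1 R 𝓔) (hA2 : HypA2 𝓔) (hA3 : HypA3 R 𝓔)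
    (n : ℕ) (X : Set M) (hX : X ∈ 𝓔 n) (p : ℕ)
    (hpath : ∀ i : ℕ, i ≤ p → (R.toEquiv ^ (i : ℤ)) '' X ∈ iterColl R (𝓔 n) n)
    (hX' : (R.toEquiv ^ (p : ℤ)) '' X ∈ 𝓔 n) :
    (R.toEquiv ^ (p : ℤ)) '' (limitK 𝓔 ∩ X) = limitK 𝓔 ∩ (R.toEquiv ^ (p : ℤ)) '' X := by
  have hcompat := hA1.2.2
  -- choose shift exponents `k i` with `k 0 = k p = 0` and `R^{i - k i}(X) ∈ 𝓔 n`
  have hex : ∀ i : ℕ, ∃ c : ℤ, ((i = 0 ∨ i = p) → c = 0) ∧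
      (i ≤ p → |c| ≤ (n : ℤ) ∧ (R.toEquiv ^ ((i : ℤ) - c)) '' X ∈ 𝓔 n) := by
    intro i
    by_cases h0 : i = 0
    · exact ⟨0, fun _ => rfl, fun _ => ⟨by simp, by simpa [h0] using hX⟩⟩
    by_cases hp : i = p
    · refine ⟨0, fun _ => rfl, fun _ => ⟨by simp, ?_⟩⟩
      simpa [hp] using hX'
    by_cases hip : i ≤ p
    · obtain ⟨c, hc, Z, hZ, hEq⟩ := hpath i hip
      refine ⟨c, fun h => by tauto, fun _ => ⟨hc, ?_⟩⟩
      have : (R.toEquiv ^ ((i : ℤ) - c)) '' X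
          = (R.toEquiv ^ (-c)) '' ((R.toEquiv ^ (i : ℤ)) '' X) := by
        have he : (i : ℤ) - c = -c + (i : ℤ) := by ring
        rw [he, aux_zpow_image]
      rw [this, hEq, ← aux_zpow_image]
      simpa using hZ
    · exact ⟨0, fun h => rfl, fun h => absurd h hip⟩
  choose k hk0 hk using hex
  have hkp : k p = 0 := hk0 p (Or.inr rfl)
  have hk00 : k 0 = 0 := hk0 0 (Or.inl rfl)
  set j : ℕ → ℤ := fun i => (i : ℤ) - k i with hj
  have hj0 : j 0 = 0 := by simp [hj, hk00]
  have hjp : j p = (p : ℤ) := by simp [hj, hkp]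
  have hstep : ∀ i < p, |j (i + 1) - j i| ≤ 2 * (n : ℤ) + 1 := by
    intro i hi
    have h1 := (hk i (by omega)).1
    have h2 := (hk (i + 1) (by omega)).1
    have hje : j (i + 1) - j i = 1 + k i - k (i + 1) := by
      simp only [hj]; push_cast; ring
    rw [hje]
    rw [abs_le] at h1 h2 ⊢
    omega
  have hbase : ∀ x ∈ X, ∀ i ≤ p, (R.toEquiv ^ (j i)) x ∈ collUnion (𝓔 n) := by
    intro x hx i hip
    exact ⟨_, (hk i hip).2, Set.mem_image_of_mem _ hx⟩
  apply Set.Subset.antisymm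
  · rintro y ⟨x, ⟨hxK, hxX⟩, rfl⟩
    refine ⟨?_, Set.mem_image_of_mem _ hxX⟩
    have := aux_key R 𝓔 hcompat n p j hj0 hstep x (hbase x hxX) hxK
    rwa [hjp] at this
  · rintro y ⟨hyK, x, hxX, rfl⟩
    refine ⟨x, ⟨?_, hxX⟩, rfl⟩
    -- reversed sequence
    set j' : ℕ → ℤ := fun i => j (p - i) - (p : ℤ) with hj'
    have hy : ∀ i : ℕ, (R.toEquiv ^ (j' i)) ((R.toEquiv ^ (p : ℤ)) x)
        = (R.toEquiv ^ (j (p - i))) x := by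
      intro i
      rw [← aux_zpow_apply]
      congr 1
      simp [hj']
    have hkey := aux_key R 𝓔 hcompat n p j' (by simp [hj', hjp])
      (fun i hi => by
        have hstep' := hstep (p - i - 1) (by omega)
        have he : j' (i + 1) - j' i = j (p - i - 1) - j (p - i) := by
          have : p - (i + 1) = p - i - 1 := by omega
          simp [hj', this]
        rw [he, abs_sub_comm]
        have : p - i - 1 + 1 = p - i := by omega
        rwa [this] at hstep')
      ((R.toEquiv ^ (p : ℤ)) x)
      (fun i hi => by rw [hy i]; exact hbase x hxX (p - i) (by omega)) hyK
    rw [hy p] at hkey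
    simpa [hj0] using hkey

end
end

section
/- Let (𝓔ₙ⁰)_{n∈ℕ} be a sequence of collections of rectangles for a homeomorphism R of a compact manifold M, satisfying hypotheses A₁ and A₃ and such that the graph 𝓖(𝓔₀⁰) has no edge, and let (Mₙ)_{n≥1} be a sequence of homeomorphisms of M satisfying hypotheses B₁, B₂ and B₃. Then: (1) the sequence (Ψₙ) converges uniformly to a continuous map Ψ : M → M (in general non-invertible); (2) the sequence (gₙ) converges uniformly to a homeomorphism g of M, and (gₙ⁻¹) converges uniformly to g⁻¹; (3) g is a topological extension of R: R ∘ Ψ = Ψ ∘ g. -/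
open Set Function MeasureTheory Topology Filter

noncomputable section

variable {M : Type*}

/-!
Eventually the rectangles of `𝓔ₙⁿ` are too small to be open, so `Mₙ₊₁`, being supported in
`Eₙⁿ`, maps each of them onto itself. By refinement, a point that starts moving inside some
rectangle never leaves it afterwards, and these rectangles shrink (A₃): `Ψₙ` is uniformly Cauchy.
By B₂, `gₙ₊₁ x` can differ from `gₙ x` only when `Ψₙ` sends both into a common rectangle of
`𝓔ₙ^{n+1} \ 𝓔ₙ^{n-1}`; by compatibility `Mₙ` is the identity there, so both points lie in its
`Ψₙ₋₁`-preimage, and these preimages shrink (B₃). Hence `gₙ`, and by the symmetry `R ↔ R⁻¹` also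
`gₙ⁻¹`, are uniformly Cauchy; the limits are inverse homeomorphisms, and `Ψₙ ∘ gₙ = R ∘ Ψₙ`
passes to the limit.
-/

section Powers
variable [TopologicalSpace M] (R : M ≃ₜ M)

theorem Homeomorph.coe_toEquiv_zpow (k : ℤ) : ⇑(R.toEquiv ^ k) = ⇑(R ^ k) := by
  have h : R.toEquiv ^ k = (R ^ k).toEquiv :=
    (map_zpow (⟨⟨Homeomorph.toEquiv, rfl⟩, fun _ _ => rfl⟩ : (M ≃ₜ M) →* Equiv.Perm M) R k).symm
  rw [h, Homeomorph.coe_toEquiv]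

theorem Homeomorph.symm_toEquiv_zpow (k : ℤ) : R.symm.toEquiv ^ k = R.toEquiv ^ (-k) := by
  rw [zpow_neg, ← inv_zpow]
  rfl

end Powers

section Support
variable [TopologicalSpace M] {f : M ≃ₜ M} {x : M}

theorem apply_eq_of_notMem_homeoSupport (h : x ∉ homeoSupport f) : f x = x :=
  not_not.1 fun hx => h (subset_closure hx)

theorem apply_mem_homeoSupport_of_ne (h : f x ≠ x) : f x ∈ homeoSupport f :=
  subset_closure fun hfx => h (f.injective hfx)

theorem homeoSupport_symm (f : M ≃ₜ M) : homeoSupport f.symm = homeoSupport f := by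
  simp only [homeoSupport, ne_eq, f.symm_apply_eq, eq_comm]

theorem apply_mem_iff_of_disjoint_homeoSupport {Z : Set M} (hZ : Disjoint Z (homeoSupport f)) :
    f x ∈ Z ↔ x ∈ Z := by
  by_cases hx : f x = x
  · rw [hx]
  · exact iff_of_false (disjoint_left.1 hZ · (apply_mem_homeoSupport_of_ne hx))
      (disjoint_left.1 hZ · (subset_closure hx))

end Support

theorem IsRectangle.isCompact_isConnected [TopologicalSpace M] {d : ℕ} {X : Set M}
    (hX : IsRectangle d X) : IsCompact X ∧ IsConnected X := by
  obtain ⟨e⟩ := hX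
  have hrange : range ((↑) ∘ e.symm) = X := (e.symm.surjective.range_comp _).trans Subtype.range_coe
  have : CompactSpace (Metric.closedBall (0 : EuclideanSpace ℝ (Fin d)) 1) :=
    isCompact_iff_compactSpace.1 (isCompact_closedBall _ _)
  have : ConnectedSpace (Metric.closedBall (0 : EuclideanSpace ℝ (Fin d)) 1) :=
    isConnected_iff_connectedSpace.1
      ((convex_closedBall _ _).isConnected (Metric.nonempty_closedBall.2 zero_le_one))
  have hcont : Continuous (Subtype.val ∘ e.symm) := continuous_subtype_val.comp e.symm.continuous
  exact hrange ▸ ⟨isCompact_range hcont, isConnected_range hcont⟩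

section IterColl
variable [TopologicalSpace M] (R : M ≃ₜ M) {𝓔 : Set (Set M)}

theorem mem_iterColl_iff {Y : Set M} {p : ℕ} :
    Y ∈ iterColl R 𝓔 p ↔ ∃ k : ℤ, |k| ≤ p ∧ ∃ X ∈ 𝓔, Y = (R ^ k) '' X := by
  simp only [iterColl, mem_ofPred_eq, Homeomorph.coe_toEquiv_zpow]

theorem iterColl_mono {p q : ℕ} (h : p ≤ q) : iterColl R 𝓔 p ⊆ iterColl R 𝓔 q := by
  rintro Y ⟨k, hk, X, hX, rfl⟩
  exact ⟨k, hk.trans (by exact_mod_cast h), X, hX, rfl⟩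

theorem iterColl_symm (p : ℕ) : iterColl R.symm 𝓔 p = iterColl R 𝓔 p := by
  ext Y
  simp only [iterColl, mem_ofPred_eq, Homeomorph.symm_toEquiv_zpow]
  exact ⟨fun ⟨k, hk, h⟩ => ⟨-k, by rwa [abs_neg], h⟩,
    fun ⟨k, hk, h⟩ => ⟨-k, by rwa [abs_neg], by rwa [neg_neg]⟩⟩

theorem finite_iterColl (h𝓔 : 𝓔.Finite) (p : ℕ) : (iterColl R 𝓔 p).Finite := by
  refine ((Set.finite_Icc (-(p : ℤ)) p).image2 (fun k X => ⇑(R.toEquiv ^ k) '' X) h𝓔).subset ?_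
  rintro Y ⟨k, hk, X, hX, rfl⟩
  exact mem_image2_of_mem (abs_le.1 hk) hX

theorem isCompact_isConnected_of_mem_iterColl {d : ℕ} (h𝓔 : ∀ X ∈ 𝓔, IsRectangle d X)
    {Y : Set M} {p : ℕ} (hY : Y ∈ iterColl R 𝓔 p) :
    IsCompact Y ∧ IsConnected Y := by
  obtain ⟨k, -, X, hX, rfl⟩ := (mem_iterColl_iff R).1 hY
  obtain ⟨hc, hconn⟩ := (h𝓔 X hX).isCompact_isConnected
  exact ⟨hc.image (R ^ k).continuous, hconn.image _ (R ^ k).continuous.continuousOn⟩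

theorem image_mem_iterColl_succ {Y : Set M} {p : ℕ} (hY : Y ∈ iterColl R 𝓔 p) :
    ⇑R '' Y ∈ iterColl R 𝓔 (p + 1) := by
  obtain ⟨k, hk, X, hX, rfl⟩ := (mem_iterColl_iff R).1 hY
  refine (mem_iterColl_iff R).2 ⟨1 + k, ?_, X, hX, ?_⟩
  · push_cast
    exact (abs_add_le 1 k).trans (by simpa [add_comm] using hk)
  · rw [← image_comp, zpow_one_add]
    rfl

theorem image_symm_mem_iterColl_succ {Y : Set M} {p : ℕ} (hY : Y ∈ iterColl R 𝓔 p) :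
    ⇑R.symm '' Y ∈ iterColl R 𝓔 (p + 1) :=
  iterColl_symm R (p + 1) ▸ image_mem_iterColl_succ R.symm ((iterColl_symm R p).symm ▸ hY)

theorem IterableColl.eq_or_disjoint {q : ℕ} (h : IterableColl R 𝓔 q) {Y Y' : Set M}
    (hY : Y ∈ iterColl R 𝓔 q) (hY' : Y' ∈ iterColl R 𝓔 q) : Y = Y' ∨ Disjoint Y Y' := by
  obtain ⟨k, hk, X, hX, rfl⟩ := hY
  obtain ⟨l, hl, X', hX', rfl⟩ := hY'
  exact (h X hX X' hX' k l hk hl).symm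

theorem IterableColl.pairwise_disjoint {p q : ℕ} (h : IterableColl R 𝓔 q) (hpq : p ≤ q) :
    (iterColl R 𝓔 p).Pairwise Disjoint := fun _ hY _ hY' hne =>
  ((h.eq_or_disjoint R (iterColl_mono R hpq hY) (iterColl_mono R hpq hY')).resolve_left hne)

theorem IterableColl.disjoint_collUnion {p q : ℕ} (h : IterableColl R 𝓔 q) (hpq : p ≤ q)
    {Y : Set M} (hY : Y ∈ iterColl R 𝓔 q) (hYp : Y ∉ iterColl R 𝓔 p) :
    Disjoint Y (collUnion (iterColl R 𝓔 p)) :=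
  disjoint_sUnion_right.2 fun _ hY' =>
    (h.eq_or_disjoint R hY (iterColl_mono R hpq hY')).resolve_left fun heq => hYp (heq ▸ hY')

theorem IterableColl.symm {q : ℕ} (h : IterableColl R 𝓔 q) : IterableColl R.symm 𝓔 q := by
  intro X hX X' hX' k l hk hl
  simp only [Homeomorph.symm_toEquiv_zpow]
  exact h X hX X' hX' (-k) (-l) (by rwa [abs_neg]) (by rwa [abs_neg])

end IterColl

section Hypotheses
variable [TopologicalSpace M] (R : M ≃ₜ M)

theorem subset_of_mem_iterColl_of_inter_nonempty {𝓔 : ℕ → Set (Set M)}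
    (hIter : ∀ n, IterableColl R (𝓔 n) (n + 1))
    (hRef : ∀ m n, m < n → Refines (iterColl R (𝓔 n) (n + 1)) (iterColl R (𝓔 m) (m + 1)))
    {k j : ℕ} (hkj : k ≤ j) {Z Z' : Set M} (hZ : Z ∈ iterColl R (𝓔 k) (k + 1))
    (hZ' : Z' ∈ iterColl R (𝓔 j) (j + 1)) (hmeet : (Z' ∩ Z).Nonempty) : Z' ⊆ Z := by
  rcases hkj.eq_or_lt with rfl | hlt
  · rcases (hIter k).eq_or_disjoint R hZ' hZ with rfl | hdisj
    exacts [subset_rfl, absurd hmeet (not_nonempty_iff_eq_empty.2 hdisj.inter_eq)]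
  · rcases (hRef k j hlt).2 Z hZ Z' hZ' with hdisj | hsub
    exacts [absurd hmeet (not_nonempty_iff_eq_empty.2 hdisj.symm.inter_eq),
      hsub.trans interior_subset]

theorem CompatibleFor.disjoint_of_mem_iterColl_diff {𝓕 𝓔 : Set (Set M)} {p : ℕ}
    (hComp : CompatibleFor R 𝓕 𝓔 (p + 1)) (hIter : IterableColl R 𝓕 (p + 2)) {Z : Set M}
    (hZ : Z ∈ iterColl R 𝓕 (p + 2) \ iterColl R 𝓕 p) :
    Disjoint Z (collUnion (iterColl R 𝓔 p)) := by
  obtain ⟨⟨c, hc, X₀, hX₀, rfl⟩, hZnew⟩ := hZ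
  refine disjoint_left.2 fun z hzZ ⟨_, ⟨j, hj, X₁, hX₁, rfl⟩, a, ha, hz⟩ => ?_
  have haF : a ∈ (R.toEquiv ^ (c - j)) '' collUnion 𝓕 := by
    obtain ⟨b, hb, hbz⟩ := hzZ
    refine ⟨b, ⟨X₀, hX₀, hb⟩, (R.toEquiv ^ j).injective ?_⟩
    rw [← Equiv.Perm.mul_apply, ← zpow_add, add_sub_cancel, hbz, hz]
  have hcj : |c - j| ≤ 2 * ((p + 1 : ℕ) : ℤ) + 1 := by
    have := abs_sub c j
    push_cast at hc hj ⊢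
    omega
  obtain ⟨X₂, hX₂, haX₂⟩ := hComp.2 (c - j) hcj ⟨haF, X₁, hX₁, ha⟩
  have hY : (R.toEquiv ^ j) '' X₂ ∈ iterColl R 𝓕 p := ⟨j, hj, X₂, hX₂, rfl⟩
  rcases hIter.eq_or_disjoint R ⟨c, hc, X₀, hX₀, rfl⟩ (iterColl_mono R (by omega) hY)
    with heq | hdisj
  · exact hZnew (heq ▸ hY)
  · exact disjoint_left.1 hdisj hzZ ⟨a, haX₂, hz⟩

theorem CompatibleFor.symm {𝓕 𝓔 : Set (Set M)} {p : ℕ} (h : CompatibleFor R 𝓕 𝓔 p) :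
    CompatibleFor R.symm 𝓕 𝓔 p := by
  refine ⟨h.1, fun k hk => ?_⟩
  rw [Homeomorph.symm_toEquiv_zpow]
  exact h.2 (-k) (by rwa [abs_neg])

theorem HypB2.symm {𝓔 : ℕ → Set (Set M)} {Mseq : ℕ → M ≃ₜ M} (h : HypB2 R 𝓔 Mseq) :
    HypB2 R.symm 𝓔 Mseq := by
  intro n X hX hRX x hx
  rw [iterColl_symm] at hX hRX
  have hX' : ⇑R '' (⇑R.symm '' X) = X := R.image_symm_image X
  have := h n _ hRX (hX'.symm ▸ hX) (R.symm x) (mem_image_of_mem _ hx)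
  rw [R.apply_symm_apply] at this
  rw [this, R.symm_apply_apply]

theorem HypB1.symm {𝓔 : ℕ → Set (Set M)} {Mseq : ℕ → M ≃ₜ M} (h : HypB1 R 𝓔 Mseq) :
    HypB1 R.symm 𝓔 Mseq := by
  simpa only [HypB1, iterColl_symm] using h

end Hypotheses

theorem HypB3.symm [MetricSpace M] {R : M ≃ₜ M} {𝓔 : ℕ → Set (Set M)} {Mseq : ℕ → M ≃ₜ M}
    (h : HypB3 R 𝓔 Mseq) : HypB3 R.symm 𝓔 Mseq := by
  simpa only [HypB3, iterColl_symm] using h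

section Preservation
variable [TopologicalSpace M] [T2Space M]

/-- `f` fixes the points outside `⋃₀ 𝓒`, hence a frontier point of `X`; so the connected set
`f '' X`, which lies in the union of the disjoint closed sets `X` and `⋃₀ (𝓒 \ {X})`, meets `X`
and therefore stays in it. -/
theorem mapsTo_of_homeoSupport_subset_sUnion {f : M ≃ₜ M} {𝓒 : Set (Set M)} (hfin : 𝓒.Finite)
    (hclosed : ∀ X ∈ 𝓒, IsClosed X) (hconn : ∀ X ∈ 𝓒, IsPreconnected X)
    (hopen : ∀ X ∈ 𝓒, ¬IsOpen X) (hdisj : 𝓒.Pairwise Disjoint) (hsupp : homeoSupport f ⊆ ⋃₀ 𝓒)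
    {X : Set M} (hX : X ∈ 𝓒) : MapsTo f X X := by
  set E' := ⋃₀ (𝓒 \ {X})
  have hE'closed : IsClosed E' := by
    rw [show E' = _ from sUnion_eq_biUnion]
    exact (hfin.subset sdiff_subset).isClosed_biUnion fun Y hY => hclosed Y hY.1
  have hXE' : Disjoint X E' := disjoint_sUnion_right.2 fun Y hY => hdisj hX hY.1 (Ne.symm hY.2)
  have hcover : ⋃₀ 𝓒 ⊆ X ∪ E' := fun y ⟨Y, hY, hyY⟩ => by
    by_cases hYX : Y = X
    exacts [Or.inl (hYX ▸ hyY), Or.inr ⟨Y, ⟨hY, hYX⟩, hyY⟩]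
  have hfix : ∀ y ∉ X ∪ E', f y = y := fun y hy =>
    apply_eq_of_notMem_homeoSupport fun h => hy (hcover (hsupp h))
  have himage : f '' X ⊆ X ∪ E' := by
    rintro _ ⟨y, hy, rfl⟩
    by_cases hfy : f y = y
    · exact Or.inl (hfy.symm ▸ hy)
    · exact hcover (hsupp (apply_mem_homeoSupport_of_ne hfy))
  obtain ⟨z, hzX, hzfix⟩ : ∃ z ∈ X, f z = z := by
    obtain ⟨z, hzX, hz⟩ := not_subset.1 (mt subset_interior_iff_isOpen.1 (hopen X hX))
    have hzcl : z ∈ closure (X ∪ E')ᶜ := by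
      rw [compl_union, inter_comm]
      refine hE'closed.isOpen_compl.inter_closure ⟨disjoint_left.1 hXE' hzX, ?_⟩
      rwa [closure_compl]
    exact ⟨z, hzX, (EqOn.closure hfix f.continuous continuous_id) hzcl⟩
  rw [mapsTo_iff_image_subset]
  refine ((isPreconnected_iff_subset_of_disjoint_closed.1 ((hconn X hX).image f
    f.continuous.continuousOn)) X E' (hclosed X hX) hE'closed himage
    (by rw [hXE'.inter_eq, inter_empty])).resolve_right fun h => ?_
  exact disjoint_left.1 hXE' hzX (h ⟨z, hzX, hzfix⟩)

theorem mapsTo_symm_of_homeoSupport_subset_sUnion {f : M ≃ₜ M} {𝓒 : Set (Set M)}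
    (hfin : 𝓒.Finite) (hclosed : ∀ X ∈ 𝓒, IsClosed X) (hconn : ∀ X ∈ 𝓒, IsPreconnected X)
    (hopen : ∀ X ∈ 𝓒, ¬IsOpen X) (hdisj : 𝓒.Pairwise Disjoint) (hsupp : homeoSupport f ⊆ ⋃₀ 𝓒)
    {X : Set M} (hX : X ∈ 𝓒) : MapsTo f X X ∧ MapsTo f.symm X X :=
  ⟨mapsTo_of_homeoSupport_subset_sUnion hfin hclosed hconn hopen hdisj hsupp hX,
    mapsTo_of_homeoSupport_subset_sUnion hfin hclosed hconn hopen hdisj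
      (homeoSupport_symm f ▸ hsupp) hX⟩

end Preservation

theorem ChartedSpace.not_isOpen_singleton {H : Type*} [TopologicalSpace H] [PerfectSpace H]
    [TopologicalSpace M] [ChartedSpace H M] (x : M) : ¬IsOpen ({x} : Set M) := fun h => by
  have := (chartAt H x).isOpen_image_of_subset_source h (by simp)
  rw [image_singleton] at this
  exact _root_.not_isOpen_singleton _ this

/-- A nonempty clopen set contains a connected component, and `x ↦ diam (connectedComponent x)` is
positive and locally constant. -/
theorem exists_pos_le_diam_of_isClopen [MetricSpace M] [CompactSpace M] [LocallyConnectedSpace M]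
    (h : ∀ x : M, ¬IsOpen ({x} : Set M)) :
    ∃ δ > 0, ∀ X : Set M, IsClopen X → X.Nonempty → δ ≤ Metric.diam X := by
  rcases isEmpty_or_nonempty M with hM | hM
  · exact ⟨1, one_pos, fun X _ ⟨x, _⟩ => (IsEmpty.false x).elim⟩
  set f : M → ℝ := fun x => Metric.diam (connectedComponent x)
  have hf : Continuous f := (IsLocallyConstant.of_constant_on_connected_components
    fun x y hy => by simp only [f, connectedComponent_eq hy]).continuous
  have hpos : ∀ x, 0 < f x := fun x => by
    refine Metric.diam_pos (not_subsingleton_iff.1 fun hs => h x ?_)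
      Metric.isBounded_of_compactSpace
    rw [← hs.eq_singleton_of_mem mem_connectedComponent]
    exact isOpen_connectedComponent
  obtain ⟨x₀, -, hx₀⟩ := isCompact_univ.exists_isMinOn univ_nonempty hf.continuousOn
  refine ⟨f x₀, hpos x₀, fun X hX ⟨x, hx⟩ => ?_⟩
  exact (hx₀ (mem_univ x)).trans
    (Metric.diam_mono (hX.connectedComponent_subset hx) Metric.isBounded_of_compactSpace)

theorem eq_empty_of_hasNoCycle [TopologicalSpace M] [Finite M] {R : M ≃ₜ M}
    {𝓔 : Set (Set M)} {n : ℕ} (h : HasNoCycle R (iterColl R 𝓔 n))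
    (hn : orderOf R.toEquiv ≤ n) : 𝓔 = ∅ := by
  refine eq_empty_of_forall_notMem fun X hX => h ⟨X, orderOf R.toEquiv,
    iterColl_mono R (Nat.zero_le n) ⟨0, by simp, X, hX, by simp⟩,
    (isOfFinOrder_of_finite _).orderOf_pos, fun i hi => ⟨i, ?_, X, hX, rfl⟩, ?_⟩
  · rw [abs_of_nonneg (Int.natCast_nonneg i)]
    exact_mod_cast hi.trans hn
  · rw [zpow_natCast, pow_orderOf_eq_one, Equiv.Perm.coe_one, image_id]

/-- In dimension `0`, `M` is finite and an orbit of rectangles would close up into a cycle, so the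
collections are eventually empty; in positive dimension the rectangles become smaller than any
nonempty clopen set. -/
theorem eventually_not_isOpen_of_mem_iterColl {d : ℕ} [MetricSpace M] [CompactSpace M]
    [ChartedSpace (EuclideanSpace ℝ (Fin d)) M] {R : M ≃ₜ M} {𝓔 : ℕ → Set (Set M)}
    (hrect : ∀ n, IsRectCollection d (𝓔 n)) (hcycle : ∀ n, HasNoCycle R (iterColl R (𝓔 n) n))
    (hA3 : HypA3 R 𝓔) : ∃ N, ∀ n ≥ N, ∀ X ∈ iterColl R (𝓔 n) n, ¬IsOpen X := by
  rcases Nat.eq_zero_or_pos d with rfl | hd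
  · have : DiscreteTopology M := ChartedSpace.discreteTopology (EuclideanSpace ℝ (Fin 0)) M
    have : Finite M := finite_of_compact_of_discrete
    refine ⟨orderOf R.toEquiv, fun n hn X ⟨_, _, X₀, hX₀, _⟩ => ?_⟩
    rw [eq_empty_of_hasNoCycle (hcycle n) hn] at hX₀
    exact hX₀.elim
  · have : Nonempty (Fin d) := ⟨⟨0, hd⟩⟩
    have : PerfectSpace (EuclideanSpace ℝ (Fin d)) := perfectSpace_of_module ℝ _
    have : LocallyConnectedSpace M :=
      ChartedSpace.locallyConnectedSpace (EuclideanSpace ℝ (Fin d)) M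
    obtain ⟨δ, hδ, hδX⟩ := exists_pos_le_diam_of_isClopen (M := M)
      (ChartedSpace.not_isOpen_singleton (H := EuclideanSpace ℝ (Fin d)))
    obtain ⟨N, hN⟩ := hA3 (δ / 2) (half_pos hδ)
    refine ⟨N, fun n hn X hX hXopen => ?_⟩
    obtain ⟨hXc, hXconn⟩ := isCompact_isConnected_of_mem_iterColl R (hrect n).2.1 hX
    linarith [hN n hn X hX, hδX X ⟨hXc.isClosed, hXopen⟩ hXconn.nonempty]

def PreservesRectsFrom [TopologicalSpace M] (R : M ≃ₜ M) (𝓔 : ℕ → Set (Set M))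
    (Mseq : ℕ → M ≃ₜ M) (N : ℕ) : Prop :=
  ∀ n ≥ N, ∀ X ∈ iterColl R (𝓔 n) n, MapsTo (Mseq (n + 1)) X X ∧ MapsTo (Mseq (n + 1)).symm X X

theorem PreservesRectsFrom.symm [TopologicalSpace M] {R : M ≃ₜ M} {𝓔 : ℕ → Set (Set M)}
    {Mseq : ℕ → M ≃ₜ M} {N : ℕ} (h : PreservesRectsFrom R 𝓔 Mseq N) :
    PreservesRectsFrom R.symm 𝓔 Mseq N := by
  simpa only [PreservesRectsFrom, iterColl_symm] using h

theorem exists_preservesRectsFrom {d : ℕ} [MetricSpace M] [CompactSpace M]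
    [ChartedSpace (EuclideanSpace ℝ (Fin d)) M] {R : M ≃ₜ M} {𝓔 : ℕ → Set (Set M)}
    {Mseq : ℕ → M ≃ₜ M} (hrect : ∀ n, IsRectCollection d (𝓔 n))
    (hIter : ∀ n, IterableColl R (𝓔 n) (n + 1)) (hcycle : ∀ n, HasNoCycle R (iterColl R (𝓔 n) n))
    (hA3 : HypA3 R 𝓔) (hB1 : HypB1 R 𝓔 Mseq) : ∃ N, PreservesRectsFrom R 𝓔 Mseq N := by
  obtain ⟨N, hN⟩ := eventually_not_isOpen_of_mem_iterColl hrect hcycle hA3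
  refine ⟨N, fun n hn X hX => mapsTo_symm_of_homeoSupport_subset_sUnion
    (finite_iterColl R (hrect n).1 n)
    (fun Y hY => (isCompact_isConnected_of_mem_iterColl R (hrect n).2.1 hY).1.isClosed)
    (fun Y hY => (isCompact_isConnected_of_mem_iterColl R (hrect n).2.1 hY).2.isPreconnected)
    (hN n hn) ((hIter n).pairwise_disjoint R n.le_succ) (hB1 n) hX⟩

/-- The first set of the `𝓩 k` inside which `u` moves traps all its later moves. -/
theorem eq_or_exists_mem_of_nested_steps {𝓩 : ℕ → Set (Set M)} {Φ : ℕ → M → M} {u : ℕ → M}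
    {n : ℕ} (hnest : ∀ k j, k ≤ j → ∀ Z ∈ 𝓩 k, ∀ Z' ∈ 𝓩 j, (Z' ∩ Z).Nonempty → Z' ⊆ Z)
    (hΦ : ∀ k j, n ≤ k → k ≤ j → ∀ Z ∈ 𝓩 k, ∀ w, Φ j w ∈ Z ↔ Φ k w ∈ Z)
    (hstep : ∀ j ≥ n, u (j + 1) = u j ∨ ∃ Z ∈ 𝓩 j, Φ j (u j) ∈ Z ∧ Φ j (u (j + 1)) ∈ Z) :
    ∀ m ≥ n, u m = u n ∨ ∃ k, n ≤ k ∧ k ≤ m ∧ ∃ Z ∈ 𝓩 k, Φ k (u n) ∈ Z ∧ Φ k (u m) ∈ Z := by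
  intro m hm
  induction m, hm using Nat.le_induction with
  | base => exact Or.inl rfl
  | succ m hnm ih =>
    rcases hstep m hnm with heq | ⟨Z', hZ', hmZ', hm1Z'⟩
    · rw [heq]
      exact ih.imp_right fun ⟨k, hnk, hkm, hZ⟩ => ⟨k, hnk, hkm.trans m.le_succ, hZ⟩
    · right
      rcases ih with heq | ⟨k, hnk, hkm, Z, hZ, hnZ, hmZ⟩
      · exact ⟨m, hnm, m.le_succ, Z', hZ', heq ▸ hmZ', hm1Z'⟩
      · have hmZ : Φ m (u m) ∈ Z := (hΦ k m hnk hkm Z hZ _).2 hmZ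
        have hZ'Z := hnest k m hkm Z hZ Z' hZ' ⟨_, hmZ', hmZ⟩
        exact ⟨k, hnk, hkm.trans m.le_succ, Z, hZ, hnZ, (hΦ k m hnk hkm Z hZ _).1 (hZ'Z hm1Z')⟩

section Dynamics
variable [TopologicalSpace M] (R : M ≃ₜ M) {𝓔 : ℕ → Set (Set M)} {Mseq : ℕ → M ≃ₜ M} {N : ℕ}

theorem PreservesRectsFrom.apply_eq_or_exists_mem (hB1 : HypB1 R 𝓔 Mseq)
    (hPres : PreservesRectsFrom R 𝓔 Mseq N) {n : ℕ} (hn : N ≤ n) (y : M) :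
    Mseq (n + 1) y = y ∨ ∃ X ∈ iterColl R (𝓔 n) n, y ∈ X ∧ Mseq (n + 1) y ∈ X := by
  by_cases hy : Mseq (n + 1) y = y
  · exact Or.inl hy
  · obtain ⟨X, hX, hyX⟩ := hB1 n (subset_closure hy)
    exact Or.inr ⟨X, hX, hyX, (hPres n hn X hX).1 hyX⟩

theorem PreservesRectsFrom.Psi_apply_mem_iff (hIter : ∀ n, IterableColl R (𝓔 n) (n + 1))
    (hRef : ∀ m n, m < n → Refines (iterColl R (𝓔 n) (n + 1)) (iterColl R (𝓔 m) (m + 1)))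
    (hB1 : HypB1 R 𝓔 Mseq) (hPres : PreservesRectsFrom R 𝓔 Mseq N) {k j : ℕ} (hk : N ≤ k)
    (hkj : k ≤ j) {Z : Set M} (hZ : Z ∈ iterColl R (𝓔 k) (k + 1)) (w : M) :
    Psi Mseq j w ∈ Z ↔ Psi Mseq k w ∈ Z := by
  induction j, hkj using Nat.le_induction with
  | base => exact Iff.rfl
  | succ j hkj ih =>
    refine Iff.trans ?_ ih
    rcases hPres.apply_eq_or_exists_mem R hB1 (hk.trans hkj) (Psi Mseq j w) with h | ⟨X, hX, h1, h2⟩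
    · exact h ▸ Iff.rfl
    by_cases hXZ : (X ∩ Z).Nonempty
    · have hXZ := subset_of_mem_iterColl_of_inter_nonempty R hIter hRef hkj hZ
        (iterColl_mono R j.le_succ hX) hXZ
      exact iff_of_true (hXZ h2) (hXZ h1)
    · rw [not_nonempty_iff_eq_empty, ← disjoint_iff_inter_eq_empty] at hXZ
      exact iff_of_false (disjoint_left.1 hXZ h2) (disjoint_left.1 hXZ h1)

theorem Psi_gSeq_apply (n : ℕ) (x : M) : Psi Mseq n (gSeq R Mseq n x) = R (Psi Mseq n x) :=
  (Psi Mseq n).apply_symm_apply _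

theorem Psi_gSeq_succ_apply (n : ℕ) (x : M) :
    Psi Mseq n (gSeq R Mseq (n + 1) x) =
      (Mseq (n + 1)).symm (R (Mseq (n + 1) (Psi Mseq n x))) :=
  (Psi Mseq n).apply_symm_apply _

/-- With `𝓕 = 𝓔ₙ`, `p + 1 = n`, `f = Mₙ₊₁` and `y = Ψₙ x`, this compares `Ψₙ (gₙ₊₁ x)` with
`Ψₙ (gₙ x)`. -/
theorem symm_apply_conj_eq_or_exists_mem {𝓕 : Set (Set M)} {p : ℕ} {f : M ≃ₜ M}
    (hIter : IterableColl R 𝓕 (p + 2)) (hsupp : homeoSupport f ⊆ collUnion (iterColl R 𝓕 (p + 1)))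
    (hmaps : ∀ X ∈ iterColl R 𝓕 (p + 1), MapsTo f X X ∧ MapsTo f.symm X X)
    (hcomm : ∀ X ∈ iterColl R 𝓕 (p + 1), ⇑R '' X ∈ iterColl R 𝓕 (p + 1) →
      ∀ x ∈ X, f (R x) = R (f x)) (y : M) :
    f.symm (R (f y)) = R y ∨
      ∃ Z ∈ iterColl R 𝓕 (p + 2) \ iterColl R 𝓕 p, R y ∈ Z ∧ f.symm (R (f y)) ∈ Z := by
  by_cases hy : y ∈ collUnion (iterColl R 𝓕 (p + 1))
  · obtain ⟨X, hX, hyX⟩ := hy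
    by_cases hRX : ⇑R '' X ∈ iterColl R 𝓕 (p + 1)
    · rw [← hcomm X hX hRX y hyX, f.symm_apply_apply]
      exact Or.inl rfl
    have hRXmem := image_mem_iterColl_succ R hX
    have hdisj : Disjoint (⇑R '' X) (homeoSupport f.symm) := by
      rw [homeoSupport_symm]
      exact (hIter.disjoint_collUnion R (p + 1).le_succ hRXmem hRX).mono_right hsupp
    refine Or.inr ⟨⇑R '' X, ⟨hRXmem, fun h => hRX (iterColl_mono R p.le_succ h)⟩,
      mem_image_of_mem _ hyX, ?_⟩
    rw [apply_mem_iff_of_disjoint_homeoSupport hdisj]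
    exact mem_image_of_mem _ ((hmaps X hX).1 hyX)
  · rw [apply_eq_of_notMem_homeoSupport fun h => hy (hsupp h)]
    by_cases hRy : R y ∈ collUnion (iterColl R 𝓕 (p + 1))
    · obtain ⟨X, hX, hRyX⟩ := hRy
      refine Or.inr ⟨X, ⟨iterColl_mono R (p + 1).le_succ hX, fun hXp => hy ?_⟩, hRyX,
        (hmaps X hX).2 hRyX⟩
      exact ⟨_, image_symm_mem_iterColl_succ R hXp, R y, hRyX, R.symm_apply_apply y⟩
    · refine Or.inl (apply_eq_of_notMem_homeoSupport fun h => hRy (hsupp ?_))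
      rwa [← homeoSupport_symm]

end Dynamics

section Convergence
variable [MetricSpace M] [CompactSpace M] (R : M ≃ₜ M) {𝓔 : ℕ → Set (Set M)}
  {Mseq : ℕ → M ≃ₜ M} {N : ℕ}

theorem PreservesRectsFrom.exists_dist_Psi_le (hIter : ∀ n, IterableColl R (𝓔 n) (n + 1))
    (hRef : ∀ m n, m < n → Refines (iterColl R (𝓔 n) (n + 1)) (iterColl R (𝓔 m) (m + 1)))
    (hA3 : HypA3 R 𝓔) (hB1 : HypB1 R 𝓔 Mseq) (hPres : PreservesRectsFrom R 𝓔 Mseq N)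
    {ε : ℝ} (hε : 0 < ε) : ∃ n, ∀ m ≥ n, ∀ x, dist (Psi Mseq m x) (Psi Mseq n x) ≤ ε := by
  obtain ⟨N₂, hN₂⟩ := hA3 ε hε
  refine ⟨max N N₂, fun m hm x => ?_⟩
  rcases eq_or_exists_mem_of_nested_steps (𝓩 := fun j => iterColl R (𝓔 j) j) (Φ := fun _ => id)
    (u := fun j => Psi Mseq j x)
    (fun k j hkj Z hZ Z' hZ' => subset_of_mem_iterColl_of_inter_nonempty R hIter hRef hkj
      (iterColl_mono R k.le_succ hZ) (iterColl_mono R j.le_succ hZ'))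
    (fun _ _ _ _ _ _ _ => Iff.rfl)
    (fun j hj => hPres.apply_eq_or_exists_mem R hB1 (le_of_max_le_left hj) _) m hm
    with heq | ⟨k, hk, -, Z, hZ, hnZ, hmZ⟩
  · rw [heq, dist_self]
    exact hε.le
  · exact (Metric.dist_le_diam_of_mem Metric.isBounded_of_compactSpace hmZ hnZ).trans
      (hN₂ k (le_of_max_le_right hk) Z hZ)

theorem PreservesRectsFrom.exists_dist_gSeq_le (hIter : ∀ n, IterableColl R (𝓔 n) (n + 1))
    (hRef : ∀ m n, m < n → Refines (iterColl R (𝓔 n) (n + 1)) (iterColl R (𝓔 m) (m + 1)))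
    (hComp : ∀ n, CompatibleFor R (𝓔 (n + 1)) (𝓔 n) (n + 1)) (hB1 : HypB1 R 𝓔 Mseq)
    (hB2 : HypB2 R 𝓔 Mseq) (hB3 : HypB3 R 𝓔 Mseq) (hPres : PreservesRectsFrom R 𝓔 Mseq N)
    {ε : ℝ} (hε : 0 < ε) : ∃ n, ∀ m ≥ n, ∀ x, dist (gSeq R Mseq m x) (gSeq R Mseq n x) ≤ ε := by
  obtain ⟨N₃, hN₃⟩ := hB3 ε hε
  refine ⟨max N N₃ + 1, fun m hm x => ?_⟩
  obtain ⟨m, rfl⟩ : ∃ m', m = m' + 1 := ⟨m - 1, by omega⟩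
  have hstep : ∀ j ≥ max N N₃, gSeq R Mseq (j + 2) x = gSeq R Mseq (j + 1) x ∨
      ∃ Z ∈ iterColl R (𝓔 (j + 1)) (j + 2) \ iterColl R (𝓔 (j + 1)) j,
        Psi Mseq (j + 1) (gSeq R Mseq (j + 1) x) ∈ Z ∧
          Psi Mseq (j + 1) (gSeq R Mseq (j + 2) x) ∈ Z := fun j hj => by
    rw [← (Psi Mseq (j + 1)).injective.eq_iff, Psi_gSeq_apply, Psi_gSeq_succ_apply]
    exact symm_apply_conj_eq_or_exists_mem R (hIter (j + 1)) (hB1 (j + 1))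
      (hPres (j + 1) (by omega)) (hB2 (j + 1)) _
  rcases eq_or_exists_mem_of_nested_steps (u := fun j => gSeq R Mseq (j + 1) x)
    (fun k j hkj Z hZ Z' hZ' => subset_of_mem_iterColl_of_inter_nonempty R hIter hRef
      (Nat.succ_le_succ hkj) hZ.1 hZ'.1)
    (fun k j hk hkj Z hZ => hPres.Psi_apply_mem_iff R hIter hRef hB1 (by omega)
      (Nat.succ_le_succ hkj) hZ.1) hstep m (by omega)
    with heq | ⟨k, hk, -, Z, hZ, hnZ, hmZ⟩
  · rw [heq, dist_self]
    exact hε.le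
  have hdisj : Disjoint Z (homeoSupport (Mseq (k + 1))) :=
    ((hComp k).disjoint_of_mem_iterColl_diff R (hIter (k + 1)) hZ).mono_right (hB1 k)
  rw [Psi, Homeomorph.trans_apply, apply_mem_iff_of_disjoint_homeoSupport hdisj] at hnZ hmZ
  exact (Metric.dist_le_diam_of_mem (s := Psi Mseq k ⁻¹' Z) Metric.isBounded_of_compactSpace
    hmZ hnZ).trans (hN₃ k (by omega) Z hZ)

end Convergence

section UniformLimits

theorem exists_continuous_tendstoUniformly_of_dist_le {α β : Type*} [TopologicalSpace α]
    [MetricSpace β] [CompleteSpace β] {F : ℕ → α → β} (hF : ∀ n, Continuous (F n))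
    (h : ∀ ε > 0, ∃ n, ∀ m ≥ n, ∀ x, dist (F m x) (F n x) ≤ ε) :
    ∃ f, Continuous f ∧ TendstoUniformly F f atTop := by
  have hC : UniformCauchySeqOn F atTop univ := Metric.uniformCauchySeqOn_iff.2 fun ε hε => by
    obtain ⟨n, hn⟩ := h (ε / 3) (by positivity)
    refine ⟨n, fun m hm k hk x _ => ?_⟩
    linarith [dist_triangle_right (F m x) (F k x) (F n x), hn m hm x, hn k hk x]
  choose f hf using fun x => cauchySeq_tendsto_of_complete (hC.cauchySeq (mem_univ x))
  have hFf := tendstoUniformlyOn_univ.1 (hC.tendstoUniformlyOn_of_tendsto fun x _ => hf x)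
  exact ⟨f, hFf.continuous (Frequently.of_forall hF), hFf⟩

variable {α ι : Type*} [UniformSpace α] [T2Space α] {p : Filter ι} [p.NeBot]

theorem leftInverse_of_tendstoUniformly {F F' : ι → α → α} {f f' : α → α}
    (hF : TendstoUniformly F f p) (hf : Continuous f) (hF' : TendstoUniformly F' f' p)
    (h : ∀ n, LeftInverse (F n) (F' n)) : LeftInverse f f' := fun x =>
  tendsto_nhds_unique (hF.tendsto_comp hf.continuousAt (hF'.tendsto_at x))
    (tendsto_const_nhds.congr fun n => (h n x).symm)

theorem semiconj_of_tendstoUniformly {F G : ι → α → α} {f g R : α → α}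
    (hF : TendstoUniformly F f p) (hf : Continuous f) (hG : TendstoUniformly G g p)
    (hR : Continuous R) (h : ∀ n, Semiconj (F n) (G n) R) : Semiconj f g R := fun x =>
  tendsto_nhds_unique (hF.tendsto_comp hf.continuousAt (hG.tendsto_at x))
    (((hR.tendsto _).comp (hF.tendsto_at x)).congr fun n => (h n x).symm)

theorem exists_homeomorph_of_tendstoUniformly {f : ι → α ≃ₜ α} {g g' : α → α}
    (hg : TendstoUniformly (fun n => ⇑(f n)) g p)
    (hg' : TendstoUniformly (fun n => ⇑(f n).symm) g' p) :
    ∃ e : α ≃ₜ α, ⇑e = g ∧ ⇑e.symm = g' := by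
  have hgc := hg.continuous (Frequently.of_forall fun n => (f n).continuous)
  have hg'c := hg'.continuous (Frequently.of_forall fun n => (f n).symm.continuous)
  exact ⟨⟨⟨g, g', leftInverse_of_tendstoUniformly hg' hg'c hg fun n => (f n).symm_apply_apply,
    leftInverse_of_tendstoUniformly hg hgc hg' fun n => (f n).apply_symm_apply⟩, hgc, hg'c⟩,
    rfl, rfl⟩

end UniformLimits

theorem existence_Psi_g_general (d : ℕ) (M : Type*) [MetricSpace M] [CompactSpace M]
    [ChartedSpace (EuclideanSpace ℝ (Fin d)) M]
    (R : M ≃ₜ M) (𝓔 : ℕ → Set (Set M)) (hrect : ∀ n, IsRectCollection d (𝓔 n))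
    (hA1 : HypA1 R 𝓔) (hA3 : HypA3 R 𝓔)
    (Mseq : ℕ → M ≃ₜ M)
    (hB1 : HypB1 R 𝓔 Mseq) (hB2 : HypB2 R 𝓔 Mseq) (hB3 : HypB3 R 𝓔 Mseq) :
    ∃ (Ψ : M → M) (g : M ≃ₜ M),
      Continuous Ψ ∧
      TendstoUniformly (fun n => ⇑(Psi Mseq n)) Ψ Filter.atTop ∧
      TendstoUniformly (fun n => ⇑(gSeq R Mseq n)) (⇑g) Filter.atTop ∧
      TendstoUniformly (fun n => ⇑(gSeq R Mseq n).symm) (⇑g.symm) Filter.atTop ∧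
      (∀ x : M, R (Ψ x) = Ψ (g x)) := by
  obtain ⟨hIterCycle, hRef, hComp⟩ := hA1
  have hIter n := (hIterCycle n).1
  obtain ⟨N, hPres⟩ := exists_preservesRectsFrom hrect hIter (fun n => (hIterCycle n).2) hA3 hB1
  obtain ⟨Ψ, hΨc, hΨ⟩ := exists_continuous_tendstoUniformly_of_dist_le
    (fun n => (Psi Mseq n).continuous) fun ε hε =>
      hPres.exists_dist_Psi_le R hIter hRef hA3 hB1 hε
  obtain ⟨G, -, hG⟩ := exists_continuous_tendstoUniformly_of_dist_le
    (fun n => (gSeq R Mseq n).continuous) fun ε hε =>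
      hPres.exists_dist_gSeq_le R hIter hRef hComp hB1 hB2 hB3 hε
  -- `(gSeq R Mseq n).symm` is `gSeq R.symm Mseq n`, and all hypotheses are symmetric in `R`
  obtain ⟨G', -, hG'⟩ := exists_continuous_tendstoUniformly_of_dist_le
    (fun n => (gSeq R Mseq n).symm.continuous) fun ε hε =>
      hPres.symm.exists_dist_gSeq_le R.symm (fun n => (hIter n).symm R)
        (by simpa only [iterColl_symm] using hRef) (fun n => (hComp n).symm R) (hB1.symm R)
        (hB2.symm R) hB3.symm hε
  obtain ⟨g, rfl, rfl⟩ := exists_homeomorph_of_tendstoUniformly hG hG'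
  exact ⟨Ψ, g, hΨc, hΨ, hG, hG', fun x => (semiconj_of_tendstoUniformly hΨ hΨc hG R.continuous
    (fun n => Psi_gSeq_apply R n) x).symm⟩

/-- Existence of `Ψ` and `g`. Under hypotheses `A₁`, `A₃` (with `𝓖(𝓔₀⁰)`
edgeless) and `B₁`, `B₂`, `B₃`: the `Ψₙ` converge uniformly to a continuous map `Ψ`, the `gₙ`
converge uniformly to a homeomorphism `g` (and `gₙ⁻¹ → g⁻¹` uniformly), and `R ∘ Ψ = Ψ ∘ g`. -/
theorem existence_Psi_g (d : ℕ) (M : Type*) [MetricSpace M] [CompactSpace M]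
    [ChartedSpace (EuclideanSpace ℝ (Fin d)) M]
    (R : M ≃ₜ M) (𝓔 : ℕ → Set (Set M)) (hrect : ∀ n, IsRectCollection d (𝓔 n))
    (hA1 : HypA1 R 𝓔) (hA3 : HypA3 R 𝓔) (hEdge : EdgelessGraph R (𝓔 0))
    (Mseq : ℕ → M ≃ₜ M)
    (hB1 : HypB1 R 𝓔 Mseq) (hB2 : HypB2 R 𝓔 Mseq) (hB3 : HypB3 R 𝓔 Mseq) :
    ∃ (Ψ : M → M) (g : M ≃ₜ M),
      Continuous Ψ ∧
      TendstoUniformly (fun n => ⇑(Psi Mseq n)) Ψ Filter.atTop ∧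
      TendstoUniformly (fun n => ⇑(gSeq R Mseq n)) (⇑g) Filter.atTop ∧
      TendstoUniformly (fun n => ⇑(gSeq R Mseq n).symm) (⇑g.symm) Filter.atTop ∧
      (∀ x : M, R (Ψ x) = Ψ (g x)) :=
  existence_Psi_g_general d M R 𝓔 hrect hA1 hA3 Mseq hB1 hB2 hB3

end
end
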